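/- Let H_p denote the p-th probabilists' Hermite polynomial. Then for all p, q ∈ ℕ and x ∈ ℝ, H_p(x) · H_q(x) = ∑_{i=0}^{min(p,q)} (p! q!)/(i! (p-i)! (q-i)!) · H_{p+q-2i}(x). (This is the one-dimensional instance of Shigekawa's multiplication formula for multiple Wiener integrals, since I_p(h^{⊗p}) = |h|^p H_p(δh/|h|).) -/

import Mathlib

/-!
With the raising operator `L f = X * f - f'`, for which `H (n + 1) = L (H n)` and
`(H (n + 1))' = (n + 1) H n`, the Leibniz rule gives
`H (p + 1) * H (q + 1) = L (H p * H (q + 1)) + (q + 1) H p * H q`.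
By induction on `p`, the product formula for `H (p + 1) * H (q + 1)` thus follows from those for
`H p * H (q + 1)` and `H p * H q`, once the coefficients `c p q i = i! C(p, i) C(q, i)` satisfy
`c (p + 1) (q + 1) (i + 1) = c p (q + 1) (i + 1) + (q + 1) c p q i`, which is Pascal's rule.
-/

open Polynomial Finset
open scoped Nat

namespace Polynomial

section Raising

variable (R : Type*) [CommRing R]

noncomputable def hermiteRaising : R[X] →ₗ[R] R[X] := LinearMap.mulLeft R X - derivative

variable {R}

theorem hermiteRaising_apply (f : R[X]) : hermiteRaising R f = X * f - derivative f := rfl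

theorem hermiteRaising_mul (f g : R[X]) :
    hermiteRaising R (f * g) = hermiteRaising R f * g - f * derivative g := by
  simp only [hermiteRaising_apply, derivative_mul]
  ring

theorem derivative_hermiteRaising (f : R[X]) :
    derivative (hermiteRaising R f) = hermiteRaising R (derivative f) + f := by
  simp only [hermiteRaising_apply, derivative_sub, derivative_mul, derivative_X, one_mul]
  ring

end Raising

theorem hermiteRaising_hermite (n : ℕ) : hermiteRaising ℤ (hermite n) = hermite (n + 1) :=
  (hermite_succ n).symm

theorem derivative_hermite_succ (n : ℕ) :
    derivative (hermite (n + 1)) = (n + 1) • hermite n := by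
  induction n with
  | zero => simp [hermite_zero]
  | succ n ih =>
    rw [← hermiteRaising_hermite (n + 1), derivative_hermiteRaising, ih, map_nsmul,
      hermiteRaising_hermite]
    module

theorem hermite_succ_mul_hermite_succ (p q : ℕ) :
    hermite (p + 1) * hermite (q + 1)
      = hermiteRaising ℤ (hermite p * hermite (q + 1)) + (q + 1) • (hermite p * hermite q) := by
  rw [hermiteRaising_mul, hermiteRaising_hermite, derivative_hermite_succ, mul_smul_comm]
  abel

def hermiteMulCoeff (p q i : ℕ) : ℕ := i ! * p.choose i * q.choose i

@[simp]
theorem hermiteMulCoeff_zero (p q : ℕ) : hermiteMulCoeff p q 0 = 1 := by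
  simp [hermiteMulCoeff]

theorem hermiteMulCoeff_eq_zero_of_min_lt {p q i : ℕ} (h : min p q < i) :
    hermiteMulCoeff p q i = 0 := by
  rcases min_lt_iff.mp h with hp | hq
  · simp [hermiteMulCoeff, Nat.choose_eq_zero_of_lt hp]
  · simp [hermiteMulCoeff, Nat.choose_eq_zero_of_lt hq]

theorem hermiteMulCoeff_succ_succ_succ (p q i : ℕ) :
    hermiteMulCoeff (p + 1) (q + 1) (i + 1)
      = hermiteMulCoeff p (q + 1) (i + 1) + (q + 1) * hermiteMulCoeff p q i := by
  have pascal := Nat.choose_succ_succ' p i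
  have absorb := Nat.add_one_mul_choose_eq q i
  simp only [hermiteMulCoeff, Nat.factorial_succ, pascal]
  linear_combination (i ! * p.choose i) * absorb.symm

theorem hermiteMulCoeff_eq_div {K : Type*} [Field K] [CharZero K] {p q i : ℕ}
    (hp : i ≤ p) (hq : i ≤ q) :
    (hermiteMulCoeff p q i : K) = p ! * q ! / (i ! * (p - i)! * (q - i)!) := by
  rw [hermiteMulCoeff, Nat.cast_mul, Nat.cast_mul, Nat.cast_choose K hp, Nat.cast_choose K hq]
  field_simp

theorem hermiteMulCoeff_smul_hermiteRaising (p q i : ℕ) :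
    hermiteMulCoeff p q i • hermiteRaising ℤ (hermite (p + q - 2 * i))
      = hermiteMulCoeff p q i • hermite (p + q + 1 - 2 * i) := by
  by_cases h : i ≤ min p q
  · rw [hermiteRaising_hermite, show p + q - 2 * i + 1 = p + q + 1 - 2 * i by omega]
  · rw [hermiteMulCoeff_eq_zero_of_min_lt (not_le.mp h), zero_smul, zero_smul]

theorem hermite_mul_hermite_of_min_eq_zero {p q N : ℕ} (h : min p q = 0) (hN : 0 < N) :
    hermite p * hermite q = ∑ i ∈ range N, hermiteMulCoeff p q i • hermite (p + q - 2 * i) := by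
  rw [sum_eq_single_of_mem 0 (mem_range.mpr hN) fun i _ hi ↦ by
    rw [hermiteMulCoeff_eq_zero_of_min_lt (by omega), zero_smul]]
  rcases Nat.min_eq_zero_iff.mp h with rfl | rfl <;> simp [hermite_zero]

theorem hermiteRaising_sum (p q N : ℕ) :
    hermiteRaising ℤ (∑ i ∈ range N, hermiteMulCoeff p q i • hermite (p + q - 2 * i))
      = ∑ i ∈ range N, hermiteMulCoeff p q i • hermite (p + q + 1 - 2 * i) := by
  simp only [map_sum, map_nsmul, hermiteMulCoeff_smul_hermiteRaising]

/-- Letting the sum run over any range past `min p q` (the further coefficients vanish) is what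
allows the induction hypothesis to be used at both `(p, q + 1)` and `(p, q)`. -/
theorem hermite_mul_hermite (p q N : ℕ) (hN : min p q < N) :
    hermite p * hermite q = ∑ i ∈ range N, hermiteMulCoeff p q i • hermite (p + q - 2 * i) := by
  induction p generalizing q N with
  | zero => exact hermite_mul_hermite_of_min_eq_zero (by simp) (by omega)
  | succ p ih =>
    cases q with
    | zero => exact hermite_mul_hermite_of_min_eq_zero (by simp) (by omega)
    | succ q =>
      obtain ⟨M, rfl⟩ : ∃ M, N = M + 1 := ⟨N - 1, by omega⟩
      have hM : min p q < M := by omega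
      rw [hermite_succ_mul_hermite_succ, ih (q + 1) (M + 1) (by omega), ih q M hM,
        hermiteRaising_sum, smul_sum, sum_range_succ', sum_range_succ' _ M, add_right_comm,
        ← sum_add_distrib]
      congr 1
      · refine sum_congr rfl fun i _ ↦ ?_
        rw [hermiteMulCoeff_succ_succ_succ, smul_smul, add_smul,
          show p + (q + 1) + 1 - 2 * (i + 1) = p + q - 2 * i by omega,
          show p + 1 + (q + 1) - 2 * (i + 1) = p + q - 2 * i by omega]
      · rw [hermiteMulCoeff_zero, hermiteMulCoeff_zero, Nat.add_right_comm p]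

end Polynomial

/-- Shigekawa's multiplication formula in dimension one: the product formula for
probabilists' Hermite polynomials. -/
theorem hermite_mul_formula (p q : ℕ) (x : ℝ) :
    (aeval x (hermite p) : ℝ) * aeval x (hermite q)
      = ∑ i ∈ Finset.range (min p q + 1),
          ((p.factorial : ℝ) * q.factorial /
              (i.factorial * (p - i).factorial * (q - i).factorial)) *
            aeval x (hermite (p + q - 2 * i)) := by
  rw [← map_mul, hermite_mul_hermite p q _ (Nat.lt_succ_self _), map_sum]
  refine sum_congr rfl fun i hi ↦ ?_
  obtain ⟨hip, hiq⟩ := le_min_iff.mp (Nat.lt_succ_iff.mp (mem_range.mp hi))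
  rw [map_nsmul, nsmul_eq_mul, hermiteMulCoeff_eq_div hip hiq]
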